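/- Optimistic forecaster is probabilistically tail calibrated: in the setting of the second-largest construction (G₁ stochastically smaller than G₂ a.s., λ a deterministic cdf, (U, L) independent of (G₁, G₂) with U uniform on (0,1) and L ∼ λ, Xⱼ = Gⱼ⁻¹(U), Y the second largest of (X₁, X₂, L)), assume additionally that G₁ is continuous almost surely, that E[1 − G₁(t)] > 0 for all t ∈ ℝ, and that lim_{y → ∞} (1 − λ(y))/E[1 − G₁(y)] = 0. Let the forecast be F = G₁. Then for every u ∈ [0,1], lim_{t → ∞} P(Z_F^{(t)} ≤ u, Y > t)/E[1 − F(t)] = u, i.e. F is probabilistically tail calibrated for Y. -/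

import Mathlib

open MeasureTheory ProbabilityTheory Filter Set Topology

noncomputable section

/-- Conditional probability of a set given a sub-σ-algebra, as a real-valued function. -/
def condProb {Ω : Type*} {m0 : MeasurableSpace Ω} (μ : Measure Ω) (m : MeasurableSpace Ω)
    (A : Set Ω) : Ω → ℝ :=
  μ[A.indicator (fun _ => (1 : ℝ))|m]

/-- The conditional forecast excess distribution `F_t`. -/
def excessCdf (F : ℝ → ℝ) (t x : ℝ) : ℝ :=
  if F t < 1 then (F (x + t) - F t) / (1 - F t) else 1

/-- The excess probability integral transform `Z_F^{(t)}`. -/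
def excessPIT {Ω : Type*} (F : Ω → ℝ → ℝ) (Y : Ω → ℝ) (t : ℝ) (ω : Ω) : ℝ :=
  excessCdf (F ω) t (Y ω - t)

/-- Upper endpoint `x_Y = sup {x : P(Y ≤ x) < 1}` of the outcome, in `EReal`. -/
def upperEndpoint {Ω : Type*} {mΩ : MeasurableSpace Ω} (μ : Measure Ω) (Y : Ω → ℝ) : EReal :=
  sSup (Real.toEReal '' {x : ℝ | μ {ω | Y ω ≤ x} < 1})

/-- Upper endpoint of a (deterministic) cdf. -/
def cdfEndpoint (F : ℝ → ℝ) : EReal :=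
  sSup (Real.toEReal '' {x : ℝ | F x < 1})

/-- The filter of real `t` tending to an extended-real endpoint `e` from below. -/
def toEndpoint (e : EReal) : Filter ℝ :=
  Filter.comap Real.toEReal (𝓝[<] e)

/-- `F` is a random cdf: measurable in `ω`, and almost surely a continuous cdf. -/
def IsRandomCdf {Ω : Type*} {mΩ : MeasurableSpace Ω} (μ : Measure Ω) (F : Ω → ℝ → ℝ) : Prop :=
  (∀ x : ℝ, Measurable fun ω => F ω x) ∧
    ∀ᵐ ω ∂μ, Monotone (F ω) ∧ Continuous (F ω) ∧
      Tendsto (F ω) atTop (𝓝 1) ∧ Tendsto (F ω) atBot (𝓝 0)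

/-- The endpoint assumption for a sub-σ-algebra `m`: the conditional distribution of `Y`
given `m` has (non-random) upper endpoint `x_Y`. -/
def EndpointAssumption {Ω : Type*} {m0 : MeasurableSpace Ω} (μ : Measure Ω)
    (m : MeasurableSpace Ω) (Y : Ω → ℝ) : Prop :=
  (∀ t : ℝ, (t : EReal) < upperEndpoint μ Y →
      ∀ᵐ ω ∂μ, 0 < condProb μ m {ω' | t < Y ω'} ω) ∧
    ∀ᵐ ω ∂μ, condProb μ m {ω' | upperEndpoint μ Y < (Y ω' : EReal)} ω = 0

/-- `F` is tail `m`-calibrated for `Y`. -/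
def TailCalibrated {Ω : Type*} {m0 : MeasurableSpace Ω} (μ : Measure Ω)
    (m : MeasurableSpace Ω) (F : Ω → ℝ → ℝ) (Y : Ω → ℝ) : Prop :=
  (∀ t : ℝ, (t : EReal) < upperEndpoint μ Y →
      ∀ᵐ ω ∂μ, 0 < (μ[fun ω' => 1 - F ω' t|m]) ω) ∧
    ∀ u ∈ Icc (0 : ℝ) 1, ∀ᵐ ω ∂μ,
      Tendsto (fun t : ℝ =>
          condProb μ m {ω' | excessPIT F Y t ω' ≤ u ∧ t < Y ω'} ω /
            (μ[fun ω' => 1 - F ω' t|m]) ω)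
        (toEndpoint (upperEndpoint μ Y)) (𝓝 u)

/-- `F` is probabilistically tail calibrated for `Y`. -/
def ProbTailCalibrated {Ω : Type*} {mΩ : MeasurableSpace Ω} (μ : Measure Ω)
    (F : Ω → ℝ → ℝ) (Y : Ω → ℝ) : Prop :=
  (∀ t : ℝ, (t : EReal) < upperEndpoint μ Y → 0 < ∫ ω, (1 - F ω t) ∂μ) ∧
    ∀ u ∈ Icc (0 : ℝ) 1,
      Tendsto (fun t : ℝ =>
          (μ {ω | excessPIT F Y t ω ≤ u ∧ t < Y ω}).toReal / ∫ ω, (1 - F ω t) ∂μ)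
        (toEndpoint (upperEndpoint μ Y)) (𝓝 u)

/-- `F` is marginally tail calibrated for `Y`. -/
def MargTailCalibrated {Ω : Type*} {mΩ : MeasurableSpace Ω} (μ : Measure Ω)
    (F : Ω → ℝ → ℝ) (Y : Ω → ℝ) : Prop :=
  (∀ t : ℝ, (t : EReal) < upperEndpoint μ Y → 0 < ∫ ω, (1 - F ω t) ∂μ) ∧
    Tendsto (fun t : ℝ =>
        ⨆ x : Ici (0 : ℝ),
          |(μ {ω | t < Y ω ∧ Y ω ≤ t + (x : ℝ)}).toReal / (∫ ω, (1 - F ω t) ∂μ) -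
            (∫ ω in {ω' | t < Y ω'}, excessCdf (F ω) t (x : ℝ) ∂μ) /
              (μ {ω' | t < Y ω'}).toReal|)
      (toEndpoint (upperEndpoint μ Y)) (𝓝 0)

/-- Generalized Pareto survival function `(1 + ξ x)₊^(-1/ξ)` with unit scale and shape `ξ`,
interpreted as `exp (-x)` when `ξ = 0`. -/
def gpdSurv (ξ x : ℝ) : ℝ :=
  if ξ = 0 then Real.exp (-x) else (max (1 + ξ * x) 0) ^ (-(1 : ℝ) / ξ)

/-- The (generalized inverse) quantile function of a cdf. -/
def qfun (G : ℝ → ℝ) (u : ℝ) : ℝ :=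
  sInf {y : ℝ | u ≤ G y}

/-- The second largest (i.e. the median) of three real numbers. -/
def secondLargest (p q r : ℝ) : ℝ :=
  max (min p q) (min (max p q) r)

/-- `G` is a random cdf: coordinatewise measurable, and almost surely a monotone,
right-continuous cdf. -/
def IsRandomCdfRC {Ω : Type*} {mΩ : MeasurableSpace Ω} (μ : Measure Ω)
    (G : Ω → ℝ → ℝ) : Prop :=
  (∀ x : ℝ, Measurable fun ω => G ω x) ∧
    ∀ᵐ ω ∂μ, Monotone (G ω) ∧ (∀ x : ℝ, ContinuousWithinAt (G ω) (Ici x) x) ∧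
      Tendsto (G ω) atTop (𝓝 1) ∧ Tendsto (G ω) atBot (𝓝 0)

/-- The σ-algebra generated by the pair of random cdfs `(G₁, G₂)`. -/
def sigmaOfPair {Ω : Type*} (G₁ G₂ : Ω → ℝ → ℝ) : MeasurableSpace Ω :=
  MeasurableSpace.comap (fun ω => (G₁ ω, G₂ ω)) inferInstance

/-! Since `X₁ ≤ X₂`, off the event `{L > t}` the median `Y` exceeds `t` exactly when `X₁` does,
i.e. when `U > G₁(t)`, and then `Y = X₁`; continuity of `G₁` gives `G₁(X₁) = U`, so the excess
PIT is `(U - G₁(t)) / (1 - G₁(t))`. Hence `{Z ≤ u, Y > t}` differs from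
`{G₁(t) < U ≤ G₁(t) + u (1 - G₁(t))}` by at most `P(L > t) = 1 - λ(t)`, and the latter event has
probability `u E[1 - G₁(t)]` because `U` is uniform and independent of `G₁`. After division by
`E[1 - G₁(t)]` the error is `(1 - λ(t)) / E[1 - G₁(t)] → 0`. -/

section Quantile

variable {G : ℝ → ℝ} {u : ℝ}

lemma qfun_le_iff (hm : Monotone G) (hrc : ∀ x : ℝ, ContinuousWithinAt G (Ici x) x)
    (htop : Tendsto G atTop (𝓝 1)) (hbot : Tendsto G atBot (𝓝 0))
    (hu0 : 0 < u) (hu1 : u < 1) (t : ℝ) :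
    qfun G u ≤ t ↔ u ≤ G t := by
  have hne : {y | u ≤ G y}.Nonempty := (htop.eventually (eventually_ge_nhds hu1)).exists
  have hbdd : BddBelow {y | u ≤ G y} := by
    obtain ⟨y₀, hy₀⟩ := (hbot.eventually (eventually_lt_nhds hu0)).exists
    exact ⟨y₀, fun y hy => le_of_lt (hm.reflect_lt (hy₀.trans_le hy))⟩
  refine ⟨fun h => ?_, fun h => csInf_le hbdd h⟩
  have hright : ∀ y ∈ Ioi (qfun G u), u ≤ G y := fun y hy => by
    obtain ⟨s, hs, hsy⟩ := exists_lt_of_csInf_lt hne hy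
    exact hs.trans (hm hsy.le)
  have hq : u ≤ G (qfun G u) :=
    ge_of_tendsto ((hrc _).mono_left (nhdsWithin_mono _ Ioi_subset_Ici_self))
      (eventually_nhdsWithin_of_forall hright)
  exact hq.trans (hm h)

lemma apply_qfun_of_continuous (hm : Monotone G) (hc : Continuous G)
    (htop : Tendsto G atTop (𝓝 1)) (hbot : Tendsto G atBot (𝓝 0))
    (hu0 : 0 < u) (hu1 : u < 1) :
    G (qfun G u) = u := by
  have hgc := qfun_le_iff hm (fun x => hc.continuousAt.continuousWithinAt) htop hbot hu0 hu1
  have hleft : ∀ y ∈ Iio (qfun G u), G y ≤ u := fun y hy =>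
    (not_le.mp (mt (hgc y).mpr (not_le.mpr hy))).le
  exact le_antisymm
    (le_of_tendsto hc.continuousAt.continuousWithinAt (eventually_nhdsWithin_of_forall hleft))
    ((hgc _).mp le_rfl)

lemma excessCdf_max_qfun_le_and_lt_iff (hm : Monotone G) (hc : Continuous G)
    (htop : Tendsto G atTop (𝓝 1)) (hbot : Tendsto G atBot (𝓝 0))
    {v m t : ℝ} (hv0 : 0 < v) (hv1 : v < 1) (hmt : m ≤ t) :
    (excessCdf G t (max (qfun G v) m - t) ≤ u ∧ t < max (qfun G v) m) ↔
      (G t < v ∧ v ≤ G t + u * (1 - G t)) := by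
  have hq : t < qfun G v ↔ G t < v := by
    rw [← not_le, ← not_le,
      qfun_le_iff hm (fun x => hc.continuousAt.continuousWithinAt) htop hbot hv0 hv1]
  rw [lt_max_iff, or_iff_left hmt.not_gt, hq, and_comm]
  refine and_congr_right fun hGt => ?_
  have hG1 : 0 < 1 - G t := by linarith
  rw [max_eq_left (hmt.trans (hq.mpr hGt).le), excessCdf, if_pos (by linarith), sub_add_cancel,
    apply_qfun_of_continuous hm hc htop hbot hv0 hv1, div_le_iff₀ hG1]
  constructor <;> intro h <;> linarith

end Quantile

section Uniform

variable {Ω : Type*} {mΩ : MeasurableSpace Ω} {μ : Measure Ω} [IsProbabilityMeasure μ]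
  {U V W : Ω → ℝ}

lemma measureReal_uniform_le_eq_integral (hU : Measurable U) (hV : Measurable V)
    (hUunif : ∀ u ∈ Icc (0 : ℝ) 1, μ {ω | U ω ≤ u} = ENNReal.ofReal u)
    (hVr : ∀ᵐ ω ∂μ, V ω ∈ Icc (0 : ℝ) 1) (hind : IndepFun U V μ) :
    μ.real {ω | U ω ≤ V ω} = ∫ ω, V ω ∂μ := by
  have hle : MeasurableSet {p : ℝ × ℝ | p.2 ≤ p.1} := measurableSet_le measurable_snd measurable_fst
  have hcdf : ∀ᵐ v ∂(μ.map V), μ.map U (Prod.mk v ⁻¹' {p : ℝ × ℝ | p.2 ≤ p.1}) =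
      ENNReal.ofReal v := by
    filter_upwards [(ae_map_iff hV.aemeasurable measurableSet_Icc).mpr hVr] with v hv
    rw [Measure.map_apply hU (measurable_prodMk_left hle)]
    exact hUunif v hv
  have hprod : μ {ω | U ω ≤ V ω} = ∫⁻ ω, ENNReal.ofReal (V ω) ∂μ := by
    rw [show {ω | U ω ≤ V ω} = (fun ω => (V ω, U ω)) ⁻¹' {p | p.2 ≤ p.1} from rfl,
      ← Measure.map_apply (hV.prodMk hU) hle,
      (indepFun_iff_map_prod_eq_prod_map_map hV.aemeasurable hU.aemeasurable).mp hind.symm,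
      Measure.prod_apply hle, lintegral_congr_ae hcdf, lintegral_map (by fun_prop) hV]
  rw [measureReal_def, hprod, ← ofReal_integral_eq_lintegral_ofReal
      (Integrable.of_mem_Icc 0 1 hV.aemeasurable hVr) (hVr.mono fun _ h => h.1),
    ENNReal.toReal_ofReal (integral_nonneg_of_ae (hVr.mono fun _ h => h.1))]

lemma measureReal_lt_uniform_le_eq_integral_sub (hU : Measurable U) (hV : Measurable V)
    (hW : Measurable W) (hUunif : ∀ u ∈ Icc (0 : ℝ) 1, μ {ω | U ω ≤ u} = ENNReal.ofReal u)
    (hVr : ∀ᵐ ω ∂μ, V ω ∈ Icc (0 : ℝ) 1) (hWr : ∀ᵐ ω ∂μ, W ω ∈ Icc (0 : ℝ) 1)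
    (hVW : V ≤ᵐ[μ] W) (hUV : IndepFun U V μ) (hUW : IndepFun U W μ) :
    μ.real {ω | V ω < U ω ∧ U ω ≤ W ω} = ∫ ω, (W ω - V ω) ∂μ := by
  have hsplit : ({ω | U ω ≤ W ω} : Set Ω) =ᵐ[μ]
      ({ω | U ω ≤ V ω} ∪ {ω | V ω < U ω ∧ U ω ≤ W ω} : Set Ω) := by
    refine eventuallyEq_set.mpr ?_
    filter_upwards [hVW] with ω hω
    simp only [mem_union, mem_ofPred_eq]
    constructor
    · intro h
      exact (le_or_gt (U ω) (V ω)).imp_right fun h' => ⟨h', h⟩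
    · rintro (h | h)
      exacts [h.trans hω, h.2]
  have hdisj : Disjoint {ω | U ω ≤ V ω} {ω | V ω < U ω ∧ U ω ≤ W ω} :=
    disjoint_left.mpr fun _ h₁ h₂ => h₂.1.not_ge h₁
  have hmeas : MeasurableSet {ω | V ω < U ω ∧ U ω ≤ W ω} :=
    (measurableSet_lt hV hU).inter (measurableSet_le hU hW)
  have h := measureReal_congr hsplit
  rw [measureReal_union hdisj hmeas, measureReal_uniform_le_eq_integral hU hW hUunif hWr hUW,
    measureReal_uniform_le_eq_integral hU hV hUunif hVr hUV] at h
  rw [integral_sub (Integrable.of_mem_Icc 0 1 hW.aemeasurable hWr)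
    (Integrable.of_mem_Icc 0 1 hV.aemeasurable hVr)]
  linarith

lemma measureReal_lt_uniform_le_affine (hU : Measurable U) (hV : Measurable V)
    (hUunif : ∀ u ∈ Icc (0 : ℝ) 1, μ {ω | U ω ≤ u} = ENNReal.ofReal u)
    (hVr : ∀ᵐ ω ∂μ, V ω ∈ Icc (0 : ℝ) 1) (hind : IndepFun U V μ) {u : ℝ} (hu : u ∈ Icc (0 : ℝ) 1) :
    μ.real {ω | V ω < U ω ∧ U ω ≤ V ω + u * (1 - V ω)} = u * ∫ ω, (1 - V ω) ∂μ := by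
  have hφ : Measurable fun x : ℝ => x + u * (1 - x) := by fun_prop
  have hVW : ∀ᵐ ω ∂μ, V ω ≤ V ω + u * (1 - V ω) ∧ V ω + u * (1 - V ω) ∈ Icc (0 : ℝ) 1 := by
    filter_upwards [hVr] with ω ⟨h0, h1⟩
    refine ⟨?_, ?_, ?_⟩ <;> nlinarith [hu.1, hu.2]
  rw [measureReal_lt_uniform_le_eq_integral_sub (W := fun ω => V ω + u * (1 - V ω))
    hU hV (hφ.comp hV) hUunif hVr (hVW.mono fun _ h => h.2) (hVW.mono fun _ h => h.1)
    hind (hind.comp measurable_id hφ)]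
  simp only [add_sub_cancel_left]
  exact integral_const_mul u _

end Uniform

lemma abs_measureReal_sub_le_of_ae_mem_iff {Ω : Type*} {mΩ : MeasurableSpace Ω}
    {μ : Measure Ω} [IsFiniteMeasure μ] {s t e : Set Ω}
    (h : ∀ᵐ ω ∂μ, ω ∉ e → (ω ∈ s ↔ ω ∈ t)) :
    |μ.real s - μ.real t| ≤ μ.real e := by
  have hside : ∀ {a b : Set Ω}, (∀ᵐ ω ∂μ, ω ∉ e → ω ∈ a → ω ∈ b) →
      μ.real a ≤ μ.real b + μ.real e := fun hab =>
    calc μ.real _ ≤ μ.real (_ ∪ e) := ENNReal.toReal_mono (by finiteness) <| measure_mono_ae <|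
          hab.mono fun ω hω ha => (em (ω ∈ e)).elim Or.inr fun he => Or.inl (hω he ha)
      _ ≤ _ := measureReal_union_le _ _
  rw [abs_sub_le_iff]
  constructor
  · linarith [hside (h.mono fun ω hω he => (hω he).mp)]
  · linarith [hside (h.mono fun ω hω he => (hω he).mpr)]

theorem optimistic_forecaster_probTailCalibrated_general
    {Ω : Type*} {m0 : MeasurableSpace Ω} (μ : Measure Ω) [IsProbabilityMeasure μ]
    (G₁ G₂ : Ω → ℝ → ℝ) (hG₁ : IsRandomCdfRC μ G₁)
    (hG₁cont : ∀ᵐ ω ∂μ, Continuous (G₁ ω))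
    (hstoch : ∀ᵐ ω ∂μ, ∀ u ∈ Ioo (0 : ℝ) 1, qfun (G₁ ω) u ≤ qfun (G₂ ω) u)
    (lam : ℝ → ℝ)
    (U L : Ω → ℝ) (hU : Measurable U) (hL : Measurable L)
    (hUunif : ∀ u ∈ Icc (0 : ℝ) 1, μ {ω | U ω ≤ u} = ENNReal.ofReal u)
    (hUrange : μ {ω | 0 < U ω ∧ U ω < 1} = 1)
    (hLlaw : ∀ y : ℝ, (μ {ω | L ω ≤ y}).toReal = lam y)
    (hindep : IndepFun (fun ω => (U ω, L ω)) (fun ω => (G₁ ω, G₂ ω)) μ)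
    (Y : Ω → ℝ)
    (hYdef : ∀ ω, Y ω = secondLargest (qfun (G₁ ω) (U ω)) (qfun (G₂ ω) (U ω)) (L ω))
    (hpos : ∀ t : ℝ, 0 < ∫ ω, (1 - G₁ ω t) ∂μ)
    (hlam0 : Tendsto (fun y : ℝ => (1 - lam y) / ∫ ω, (1 - G₁ ω y) ∂μ) atTop (𝓝 0)) :
    ∀ u ∈ Icc (0 : ℝ) 1,
      Tendsto (fun t : ℝ =>
          (μ {ω | excessPIT G₁ Y t ω ≤ u ∧ t < Y ω}).toReal /
            ∫ ω, (1 - G₁ ω t) ∂μ)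
        atTop (𝓝 u) := by
  intro u hu
  have hUae : ∀ᵐ ω ∂μ, 0 < U ω ∧ U ω < 1 := (ae_iff_prob_eq_one (by fun_prop)).mpr hUrange
  -- Off `{t < L}` the median is `max X₁ (min X₂ L)` with `min X₂ L ≤ t`.
  have hA : ∀ t, ∀ᵐ ω ∂μ, ω ∉ {ω | t < L ω} → (ω ∈ {ω | excessPIT G₁ Y t ω ≤ u ∧ t < Y ω} ↔
      ω ∈ {ω | G₁ ω t < U ω ∧ U ω ≤ G₁ ω t + u * (1 - G₁ ω t)}) := fun t => by
    filter_upwards [hG₁.2, hG₁cont, hstoch, hUae] with ω hcdf hc hq hUω hLt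
    obtain ⟨hm, -, htop, hbot⟩ := hcdf
    simp only [excessPIT, hYdef, secondLargest, min_eq_left (hq _ hUω),
      max_eq_right (hq _ hUω)]
    exact excessCdf_max_qfun_le_and_lt_iff hm hc htop hbot hUω.1 hUω.2
      ((min_le_right _ _).trans (not_lt.mp hLt))
  have hbound : ∀ t, |(μ {ω | excessPIT G₁ Y t ω ≤ u ∧ t < Y ω}).toReal - u * ∫ ω, (1 - G₁ ω t) ∂μ|
      ≤ 1 - lam t := fun t => by
    have hVr : ∀ᵐ ω ∂μ, G₁ ω t ∈ Icc (0 : ℝ) 1 := hG₁.2.mono fun _ h =>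
      ⟨h.1.le_of_tendsto h.2.2.2 t, h.1.ge_of_tendsto h.2.2.1 t⟩
    have hind : IndepFun U (fun ω => G₁ ω t) μ :=
      hindep.comp measurable_fst ((measurable_pi_apply t).comp measurable_fst)
    have hLtail : μ.real {ω | t < L ω} = 1 - lam t := by
      rw [← hLlaw t, ← measureReal_def,
        ← probReal_compl_eq_one_sub (measurableSet_le hL measurable_const)]
      simp only [compl_ofPred, not_le]
    rw [← measureReal_lt_uniform_le_affine hU (hG₁.1 t) hUunif hVr hind hu, ← hLtail]
    exact abs_measureReal_sub_le_of_ae_mem_iff (hA t)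
  refine tendsto_sub_nhds_zero_iff.mp (squeeze_zero_norm (fun t => ?_) hlam0)
  rw [Real.norm_eq_abs, div_sub' (hpos t).ne', mul_comm _ u, abs_div, abs_of_pos (hpos t)]
  exact div_le_div_of_nonneg_right (hbound t) (hpos t).le

/-- the optimistic forecaster `F = G₁` is probabilistically tail calibrated for
the second largest of `(X₁, X₂, L)`, provided `(1 - λ(y))/E[1 - G₁(y)] → 0`. -/
theorem optimistic_forecaster_probTailCalibrated
    {Ω : Type*} {m0 : MeasurableSpace Ω} (μ : Measure Ω) [IsProbabilityMeasure μ]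
    (G₁ G₂ : Ω → ℝ → ℝ) (hG₁ : IsRandomCdfRC μ G₁) (hG₂ : IsRandomCdfRC μ G₂)
    (hG₁cont : ∀ᵐ ω ∂μ, Continuous (G₁ ω))
    (hstoch : ∀ᵐ ω ∂μ, ∀ u ∈ Ioo (0 : ℝ) 1, qfun (G₁ ω) u ≤ qfun (G₂ ω) u)
    (lam : ℝ → ℝ) (hlammono : Monotone lam)
    (hlamtop : Tendsto lam atTop (𝓝 1)) (hlambot : Tendsto lam atBot (𝓝 0))
    (U L : Ω → ℝ) (hU : Measurable U) (hL : Measurable L)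
    (hUunif : ∀ u ∈ Icc (0 : ℝ) 1, μ {ω | U ω ≤ u} = ENNReal.ofReal u)
    (hUrange : μ {ω | 0 < U ω ∧ U ω < 1} = 1)
    (hLlaw : ∀ y : ℝ, (μ {ω | L ω ≤ y}).toReal = lam y)
    (hULindep : IndepFun U L μ)
    (hindep : IndepFun (fun ω => (U ω, L ω)) (fun ω => (G₁ ω, G₂ ω)) μ)
    (Y : Ω → ℝ)
    (hYdef : ∀ ω, Y ω = secondLargest (qfun (G₁ ω) (U ω)) (qfun (G₂ ω) (U ω)) (L ω))
    (hpos : ∀ t : ℝ, 0 < ∫ ω, (1 - G₁ ω t) ∂μ)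
    (hlam0 : Tendsto (fun y : ℝ => (1 - lam y) / ∫ ω, (1 - G₁ ω y) ∂μ) atTop (𝓝 0)) :
    ∀ u ∈ Icc (0 : ℝ) 1,
      Tendsto (fun t : ℝ =>
          (μ {ω | excessPIT G₁ Y t ω ≤ u ∧ t < Y ω}).toReal /
            ∫ ω, (1 - G₁ ω t) ∂μ)
        atTop (𝓝 u) :=
  optimistic_forecaster_probTailCalibrated_general (m0 := m0) μ G₁ G₂ hG₁ hG₁cont hstoch lam U L hU
    hL hUunif hUrange hLlaw hindep Y hYdef hpos hlam0
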